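/- The optimal advance a*(R) = 1 - (-1+√(1+2R))/R is a concave function of R on (0, ∞): its second derivative is nonpositive. -/

import Mathlib

/-!
Since `(√(1+2R))² - 1 = 2R`, the optimal advance simplifies to `1 - 2/(1 + s)` with
`s = √(1+2R)`. Differentiating twice in `R` (with `ds/dR = 1/s`) gives
`a*'(R) = 2 / (s (1+s)²)` and `a*''(R) = -2 (1 + 3s) / (s (1+s))³ < 0`.
-/

open Real Set Filter Topology

noncomputable def optimalAdvance (R : ℝ) : ℝ := 1 - 2 / (1 + √(1 + 2 * R))

section

variable {R : ℝ}

theorem one_sub_div_eq_optimalAdvance (h : 0 ≤ 1 + 2 * R) (hR : R ≠ 0) :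
    1 - (-1 + √(1 + 2 * R)) / R = optimalAdvance R := by
  have hs : √(1 + 2 * R) ^ 2 = 1 + 2 * R := sq_sqrt h
  have : 0 < 1 + √(1 + 2 * R) := by positivity
  rw [optimalAdvance]
  field_simp
  linear_combination -hs

theorem hasDerivAt_sqrt_one_add_two_mul (h : 0 < 1 + 2 * R) :
    HasDerivAt (fun x => √(1 + 2 * x)) (√(1 + 2 * R))⁻¹ R := by
  have hs : 0 < √(1 + 2 * R) := sqrt_pos.mpr h
  refine ((((hasDerivAt_id' R).const_mul 2).const_add 1).sqrt h.ne').congr_deriv ?_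
  field_simp

theorem hasDerivAt_optimalAdvance (h : 0 < 1 + 2 * R) :
    HasDerivAt optimalAdvance (2 / (√(1 + 2 * R) * (1 + √(1 + 2 * R)) ^ 2)) R := by
  have hs : 0 < √(1 + 2 * R) := sqrt_pos.mpr h
  refine (((hasDerivAt_const R (2 : ℝ)).fun_div ((hasDerivAt_sqrt_one_add_two_mul h).const_add 1)
    (by positivity)).const_sub 1).congr_deriv ?_
  field_simp
  ring

theorem hasDerivAt_two_div_sqrt_mul_sq (h : 0 < 1 + 2 * R) :
    HasDerivAt (fun x => 2 / (√(1 + 2 * x) * (1 + √(1 + 2 * x)) ^ 2))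
      (-2 * (1 + 3 * √(1 + 2 * R)) / (√(1 + 2 * R) * (1 + √(1 + 2 * R))) ^ 3) R := by
  have hs : 0 < √(1 + 2 * R) := sqrt_pos.mpr h
  have hsqrt := hasDerivAt_sqrt_one_add_two_mul h
  refine ((hasDerivAt_const R (2 : ℝ)).fun_div (hsqrt.fun_mul ((hsqrt.const_add 1).fun_pow 2))
    (by positivity)).congr_deriv ?_
  field_simp
  ring

theorem deriv_optimalAdvance_eventuallyEq (h : 0 < 1 + 2 * R) :
    deriv optimalAdvance =ᶠ[𝓝 R] fun x => 2 / (√(1 + 2 * x) * (1 + √(1 + 2 * x)) ^ 2) :=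
  (continuousAt_const.eventually_lt (f := fun _ => (0 : ℝ)) (g := fun x => 1 + 2 * x)
    (by fun_prop) h).mono fun _ hx => (hasDerivAt_optimalAdvance hx).deriv

theorem deriv_deriv_optimalAdvance_neg (h : 0 < 1 + 2 * R) :
    deriv (deriv optimalAdvance) R < 0 := by
  have hs : 0 < √(1 + 2 * R) := sqrt_pos.mpr h
  rw [((hasDerivAt_two_div_sqrt_mul_sq h).congr_of_eventuallyEq
    (deriv_optimalAdvance_eventuallyEq h)).deriv]
  exact div_neg_of_neg_of_pos (by linarith) (by positivity)

end

theorem continuous_optimalAdvance : Continuous optimalAdvance :=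
  continuous_const.sub (continuous_const.div (by fun_prop) fun _ => by positivity)

theorem strictConcaveOn_optimalAdvance : StrictConcaveOn ℝ (Ici (-1 / 2)) optimalAdvance :=
  strictConcaveOn_of_deriv2_neg (convex_Ici _) continuous_optimalAdvance.continuousOn
    fun x hx => by
      rw [interior_Ici, mem_Ioi] at hx
      exact deriv_deriv_optimalAdvance_neg (by linarith)

/-- The optimal advance `a*(R) = 1 - (-1+√(1+2R))/R` is concave on `(0,∞)`:
its second derivative is nonpositive there. -/
theorem stmt3 :
    ConcaveOn ℝ (Set.Ioi 0)
      (fun R : ℝ => 1 - (-1 + Real.sqrt (1 + 2 * R)) / R) ∧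
    ∀ R : ℝ, 0 < R →
      deriv (deriv (fun R : ℝ => 1 - (-1 + Real.sqrt (1 + 2 * R)) / R)) R ≤ 0 := by
  have hEq : ∀ R : ℝ, 0 < R → 1 - (-1 + √(1 + 2 * R)) / R = optimalAdvance R := fun R hR =>
    one_sub_div_eq_optimalAdvance (by linarith) hR.ne'
  constructor
  · exact (strictConcaveOn_optimalAdvance.concaveOn.subset (Ioi_subset_Ici (by norm_num))
      (convex_Ioi 0)).congr fun R hR => (hEq R hR).symm
  · intro R hR
    have hloc : (fun R : ℝ => 1 - (-1 + √(1 + 2 * R)) / R) =ᶠ[𝓝 R] optimalAdvance :=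
      (eventually_gt_nhds hR).mono hEq
    rw [hloc.deriv.deriv_eq]
    exact (deriv_deriv_optimalAdvance_neg (by linarith)).le
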